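/- Let 0 < r < ρ < R. Suppose g is holomorphic on {z : |z| < R}, h is holomorphic on {z : |z| > r}, and h(z) → 0 as |z| → ∞. Then for every z₂ with |z₂| < ρ one has (1/(2πi)) ∮_{|z₁|=ρ} (g′(z₁) + h′(z₁)) · Log(1 − z₂/z₁) dz₁ = −g(z₂) + (1/(2πi)) ∮_{|z|=ρ} (g(z) + h(z)) / z dz, where Log is the principal branch of the complex logarithm. -/

import Mathlib

/-!
With `f = g + h` and `L z = log (1 - w / z)`, one has `L' z = (z - w)⁻¹ - z⁻¹` on the circle,
and the derivative `(f L)'` integrates to zero around it. Hence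
`∮ f' L = ∮ f / z - ∮ (z - w)⁻¹ f`. The Cauchy integral formula turns the `g`-part of the last
integral into `2πi g(w)`, while the `h`-part vanishes: it does not change when the circle is
enlarged, and on large circles it is `O(sup |h|)` since `h → 0` at infinity.
-/

open Complex Filter Metric Bornology Set Topology

theorem hasDerivAt_log_one_sub_div {w z : ℂ} (hz : ‖w‖ < ‖z‖) :
    HasDerivAt (fun z => log (1 - w / z)) ((z - w)⁻¹ - z⁻¹) z := by
  have hz0 : z ≠ 0 := norm_pos_iff.1 ((norm_nonneg w).trans_lt hz)
  have hzw : z - w ≠ 0 := sub_ne_zero.2 fun h => hz.ne (h ▸ rfl)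
  have hslit : 1 - w / z ∈ slitPlane := by
    rw [sub_eq_add_neg]
    refine mem_slitPlane_of_norm_lt_one ?_
    rwa [norm_neg, norm_div, div_lt_one (norm_pos_iff.2 hz0)]
  have hne : 1 - w / z ≠ 0 := slitPlane_ne_zero hslit
  have hinner : HasDerivAt (fun z => 1 - w / z) (w / z ^ 2) z := by
    simpa [div_eq_mul_inv] using ((hasDerivAt_inv hz0).const_mul w).const_sub 1
  refine ((hasDerivAt_log hslit).comp z hinner).congr_deriv ?_
  field_simp
  ring

theorem circleIntegrable_sub_inv_mul {f : ℂ → ℂ} {ρ : ℝ} {w : ℂ}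
    (hf : ContinuousOn f (sphere 0 ρ)) (hw : ‖w‖ < ρ) :
    CircleIntegrable (fun z => (z - w)⁻¹ * f z) 0 ρ := by
  have hzw : ∀ z ∈ sphere (0 : ℂ) ρ, z - w ≠ 0 := fun z hz =>
    sub_ne_zero.2 fun h => hw.ne (by rw [← h, ← mem_sphere_zero_iff_norm.1 hz])
  exact (((continuousOn_id.sub continuousOn_const).inv₀ hzw).mul hf).circleIntegrable
    ((norm_nonneg w).trans hw.le)

theorem circleIntegral_deriv_mul_log_one_sub_div {f : ℂ → ℂ} {ρ : ℝ} {w : ℂ}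
    (hf : AnalyticOnNhd ℂ f (sphere 0 ρ)) (hw : ‖w‖ < ρ) :
    (∮ z in C(0, ρ), deriv f z * log (1 - w / z)) =
      (∮ z in C(0, ρ), f z / z) - ∮ z in C(0, ρ), (z - w)⁻¹ * f z := by
  have hρ : 0 ≤ ρ := (norm_nonneg w).trans hw.le
  have hnorm : ∀ z ∈ sphere (0 : ℂ) ρ, ‖w‖ < ‖z‖ := fun z hz => by
    rwa [mem_sphere_zero_iff_norm.1 hz]
  have hL : ∀ z ∈ sphere (0 : ℂ) ρ,
      HasDerivAt (fun z => log (1 - w / z)) ((z - w)⁻¹ - z⁻¹) z :=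
    fun z hz => hasDerivAt_log_one_sub_div (hnorm z hz)
  have hzero : (∮ z in C(0, ρ),
      deriv f z * log (1 - w / z) + ((z - w)⁻¹ * f z - f z / z)) = 0 := by
    refine circleIntegral.integral_eq_zero_of_hasDerivWithinAt
      (f := fun z => f z * log (1 - w / z)) hρ fun z hz => ?_
    refine ((hf z hz).differentiableAt.hasDerivAt.mul (hL z hz)).hasDerivWithinAt.congr_deriv ?_
    ring
  have hz0 : ∀ z ∈ sphere (0 : ℂ) ρ, z ≠ 0 := fun z hz =>
    norm_pos_iff.1 ((norm_nonneg w).trans_lt (hnorm z hz))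
  have iA : CircleIntegrable (fun z => deriv f z * log (1 - w / z)) 0 ρ :=
    (hf.deriv.continuousOn.mul fun z hz =>
      (hL z hz).continuousAt.continuousWithinAt).circleIntegrable hρ
  have iB : CircleIntegrable (fun z => (z - w)⁻¹ * f z) 0 ρ :=
    circleIntegrable_sub_inv_mul hf.continuousOn hw
  have iC : CircleIntegrable (fun z => f z / z) 0 ρ :=
    (hf.continuousOn.div continuousOn_id hz0).circleIntegrable hρ
  rw [circleIntegral.integral_add (g := fun z => (z - w)⁻¹ * f z - f z / z) iA (iB.sub iC),
    circleIntegral.integral_sub iB iC] at hzero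
  linear_combination hzero

theorem circleIntegral_eq_zero_of_differentiableAt_of_tendsto_smul
    {E : Type*} [NormedAddCommGroup E] [NormedSpace ℂ E] [CompleteSpace E]
    {F : ℂ → E} {ρ : ℝ} (hρ : 0 < ρ) (hF : ∀ z : ℂ, ρ ≤ ‖z‖ → DifferentiableAt ℂ F z)
    (hlim : Tendsto (fun z => z • F z) (cobounded ℂ) (𝓝 0)) :
    (∮ z in C(0, ρ), F z) = 0 := by
  refine norm_le_zero_iff.1 (le_of_forall_pos_le_add fun ε hε => ?_)
  have hsmall : ∀ᶠ z in cobounded ℂ, ‖z • F z‖ ≤ ε / (2 * Real.pi) :=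
    hlim.norm.eventually (ge_mem_nhds (by rw [norm_zero]; positivity))
  rw [← comap_norm_atTop, eventually_comap, eventually_atTop] at hsmall
  obtain ⟨M, hM⟩ := hsmall
  set R := max ρ M
  have hR : 0 < R := hρ.trans_le (le_max_left _ _)
  have houter : ∀ z ∉ ball (0 : ℂ) ρ, DifferentiableAt ℂ F z := fun z hz =>
    hF z (by simpa using hz)
  have hannulus : (∮ z in C(0, R), F z) = ∮ z in C(0, ρ), F z :=
    circleIntegral_eq_of_differentiable_on_annulus_off_countable hρ (le_max_left _ _)
      countable_empty (fun z hz => (houter z hz.2).continuousAt.continuousWithinAt)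
      fun z hz => houter z fun h => hz.1.2 (ball_subset_closedBall h)
  have hbound : ∀ z ∈ sphere (0 : ℂ) R, ‖F z‖ ≤ ε / (2 * Real.pi) / R := by
    intro z hz
    have hzR : ‖z‖ = R := mem_sphere_zero_iff_norm.1 hz
    have := hM ‖z‖ (hzR ▸ le_max_right _ _) z rfl
    rwa [norm_smul, hzR, ← le_div_iff₀' hR] at this
  rw [zero_add, ← hannulus]
  refine (circleIntegral.norm_integral_le_of_norm_le_const hR.le hbound).trans_eq ?_
  field_simp

theorem circleIntegral_sub_inv_smul_eq_zero_of_tendsto_cobounded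
    {E : Type*} [NormedAddCommGroup E] [NormedSpace ℂ E] [CompleteSpace E]
    {h : ℂ → E} {ρ : ℝ} {w : ℂ} (hw : ‖w‖ < ρ)
    (hh : ∀ z : ℂ, ρ ≤ ‖z‖ → DifferentiableAt ℂ h z)
    (hlim : Tendsto h (cobounded ℂ) (𝓝 0)) :
    (∮ z in C(0, ρ), (z - w)⁻¹ • h z) = 0 := by
  have hρ : 0 < ρ := (norm_nonneg w).trans_lt hw
  refine circleIntegral_eq_zero_of_differentiableAt_of_tendsto_smul hρ (fun z hz => ?_) ?_
  · have hzw : z - w ≠ 0 := sub_ne_zero.2 fun h => (hw.trans_le hz).ne (h ▸ rfl)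
    exact ((differentiableAt_id.sub_const w).inv hzw).smul (hh z hz)
  · have hinv : Tendsto (fun z => (z - w)⁻¹) (cobounded ℂ) (𝓝 0) :=
      tendsto_inv₀_cobounded.comp (tendsto_sub_const_cobounded w)
    have hfactor : ∀ᶠ z in cobounded ℂ,
        (1 + w * (z - w)⁻¹) • h z = z • (z - w)⁻¹ • h z := by
      filter_upwards [eventually_ne_cobounded w] with z hz
      rw [smul_smul]
      congr 1
      field_simp [sub_ne_zero.2 hz]
      ring
    simpa using ((tendsto_const_nhds.add (hinv.const_mul w)).smul hlim).congr' hfactor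

theorem stmt6_general (r ρ R : ℝ) (hrρ : r < ρ) (hρR : ρ < R)
    (g h : ℂ → ℂ)
    (hg : DifferentiableOn ℂ g {z : ℂ | ‖z‖ < R})
    (hh : DifferentiableOn ℂ h {z : ℂ | r < ‖z‖})
    (hlim : Tendsto h (comap (fun z : ℂ => ‖z‖) atTop) (nhds 0)) :
    ∀ z₂ : ℂ, ‖z₂‖ < ρ →
      (2 * Real.pi * Complex.I)⁻¹ *
        (∮ z₁ in C(0, ρ), (deriv g z₁ + deriv h z₁) * Complex.log (1 - z₂ / z₁))
        = -(g z₂) +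
          (2 * Real.pi * Complex.I)⁻¹ * (∮ z in C(0, ρ), (g z + h z) / z) := by
  intro w hw
  have hinner : IsOpen {z : ℂ | ‖z‖ < R} := isOpen_lt continuous_norm continuous_const
  have houter : IsOpen {z : ℂ | r < ‖z‖} := isOpen_lt continuous_const continuous_norm
  have hg' : AnalyticOnNhd ℂ g (sphere 0 ρ) := (hg.analyticOnNhd hinner).mono fun z hz => by
    simp [mem_sphere_zero_iff_norm.1 hz, hρR]
  have hh' : AnalyticOnNhd ℂ h (sphere 0 ρ) := (hh.analyticOnNhd houter).mono fun z hz => by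
    simp [mem_sphere_zero_iff_norm.1 hz, hrρ]
  have hdisc : closedBall (0 : ℂ) ρ ⊆ {z : ℂ | ‖z‖ < R} := fun z hz =>
    (mem_closedBall_zero_iff.1 hz).trans_lt hρR
  have hcauchy : (∮ z in C(0, ρ), (z - w)⁻¹ * g z) = 2 * Real.pi * I * g w :=
    (hg.mono hdisc).circleIntegral_sub_inv_smul (mem_ball_zero_iff.2 hw)
  have hvanish : (∮ z in C(0, ρ), (z - w)⁻¹ * h z) = 0 :=
    circleIntegral_sub_inv_smul_eq_zero_of_tendsto_cobounded hw
      (fun z hz => hh.differentiableAt (houter.mem_nhds (hrρ.trans_le hz)))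
      (by rwa [comap_norm_atTop] at hlim)
  have hderiv : (∮ z in C(0, ρ), (deriv g z + deriv h z) * log (1 - w / z)) =
      ∮ z in C(0, ρ), deriv (g + h) z * log (1 - w / z) :=
    circleIntegral.integral_congr ((norm_nonneg w).trans hw.le) fun z hz => by
      rw [deriv_add (hg' z hz).differentiableAt (hh' z hz).differentiableAt]
  rw [hderiv, circleIntegral_deriv_mul_log_one_sub_div (hg'.add hh') hw]
  simp only [Pi.add_apply, mul_add]
  rw [circleIntegral.integral_add (circleIntegrable_sub_inv_mul hg'.continuousOn hw)
    (circleIntegrable_sub_inv_mul hh'.continuousOn hw), hcauchy, hvanish]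
  field_simp
  ring

/-- For `f = g + h` with `g` holomorphic on `{|z| < R}`, `h` holomorphic
on `{|z| > r}` vanishing at `∞`, `0 < r < ρ < R`, and any `z₂` with `|z₂| < ρ`:
`(1/(2πi)) ∮_{|z₁|=ρ} (g'(z₁)+h'(z₁)) Log(1 - z₂/z₁) dz₁
  = −g(z₂) + (1/(2πi)) ∮_{|z|=ρ} (g(z)+h(z))/z dz`. -/
theorem stmt6 (r ρ R : ℝ) (hr : 0 < r) (hrρ : r < ρ) (hρR : ρ < R)
    (g h : ℂ → ℂ)
    (hg : DifferentiableOn ℂ g {z : ℂ | ‖z‖ < R})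
    (hh : DifferentiableOn ℂ h {z : ℂ | r < ‖z‖})
    (hlim : Tendsto h (comap (fun z : ℂ => ‖z‖) atTop) (nhds 0)) :
    ∀ z₂ : ℂ, ‖z₂‖ < ρ →
      (2 * Real.pi * Complex.I)⁻¹ *
        (∮ z₁ in C(0, ρ), (deriv g z₁ + deriv h z₁) * Complex.log (1 - z₂ / z₁))
        = -(g z₂) +
          (2 * Real.pi * Complex.I)⁻¹ * (∮ z in C(0, ρ), (g z + h z) / z) :=
  stmt6_general r ρ R hrρ hρR g h hg hh hlim
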